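/- arXiv:1301.7520 — 2 statements merged into one kernel-verified Lean document; each statement's English description precedes it below -/
import Mathlib

section
/- For every integer n ≥ 1 and every integer l with 0 ≤ l ≤ n-1, the Stirling number of the first kind satisfies S₁(n, l+1) = C(n-1, l) · B_{n-1-l}^{(n)}, where B_m^{(n)} is the m-th Bernoulli number of order n. -/
/-- The formal power series `e^{ct} = ∑_{m≥0} c^m t^m / m!` over `ℂ`. -/
noncomputable def expPS (c : ℂ) : PowerSeries ℂ :=
  PowerSeries.mk fun m => c ^ m / (m.factorial : ℂ)

/-!
Writing `F_α(x) = (t/(e^t-1))^α e^{xt}`, differentiation in `t` gives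
`t F_α' = α F_α - α F_{α+1}(x+1) + x t F_α`; comparing the coefficients of `t^α` yields
`B_α^{(α+1)}(x+1) = x B_{α-1}^{(α)}(x)`, hence `x B_{n-1}^{(n)}(x) = x(x-1)⋯(x-n+1)` by induction.
Since `F_α(x) = F_α(0) e^{xt}`, the polynomial `B_{n-1}^{(n)}(x)` has coefficients
`C(n-1, l) B_{n-1-l}^{(n)}`, and the theorem follows by comparing the coefficients of `x^{l+1}`.
-/

section

open PowerSeries

theorem expPS_eq_rescale_exp (c : ℂ) : expPS c = rescale c (exp ℂ) := by
  ext n; simp [expPS, coeff_rescale, exp, div_eq_mul_inv]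

theorem expPS_mul_expPS (x y : ℂ) : expPS x * expPS y = expPS (x + y) := by
  simp only [expPS_eq_rescale_exp, exp_mul_exp_eq_exp_add]

theorem expPS_zero : expPS 0 = 1 := by
  ext n; cases n <;> simp [expPS]

theorem derivative_expPS (c : ℂ) : d⁄dX ℂ (expPS c) = C c * expPS c := by
  ext n
  rw [coeff_derivative, coeff_C_mul]
  simp only [expPS, coeff_mk, Nat.factorial_succ, Nat.cast_mul, pow_succ]
  field_simp
  push_cast; ring

theorem expPS_one_sub_one_ne_zero : expPS 1 - 1 ≠ 0 := fun h => by
  simpa [expPS, coeff_one] using congrArg (coeff 1) h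

theorem mul_derivative_pow {R : Type*} [CommRing R] (f : R⟦X⟧) (n : ℕ) :
    f * d⁄dX R (f ^ n) = (n : R⟦X⟧) * f ^ n * d⁄dX R f := by
  cases n with
  | zero => simp
  | succ k =>
    rw [Derivation.leibniz_pow, smul_eq_mul, nsmul_eq_mul, Nat.add_sub_cancel]
    ring

noncomputable def bernoulliGenFun (B : ℕ → ℕ → ℂ → ℂ) (α : ℕ) (x : ℂ) : ℂ⟦X⟧ :=
  mk fun m => B α m x / (m.factorial : ℂ)

variable (B : ℕ → ℕ → ℂ → ℂ)
  (hB : ∀ (α : ℕ) (x : ℂ),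
      (expPS 1 - 1) ^ α *
          PowerSeries.mk (fun m => B α m x / (m.factorial : ℂ)) =
        PowerSeries.X ^ α * expPS x)
include hB

theorem sub_one_pow_mul_bernoulliGenFun (α : ℕ) (x : ℂ) :
    (expPS 1 - 1) ^ α * bernoulliGenFun B α x = X ^ α * expPS x :=
  hB α x

theorem bernoulliGenFun_eq_mul_expPS (α : ℕ) (x : ℂ) :
    bernoulliGenFun B α x = bernoulliGenFun B α 0 * expPS x := by
  apply mul_left_cancel₀ (pow_ne_zero α expPS_one_sub_one_ne_zero)
  rw [sub_one_pow_mul_bernoulliGenFun B hB, ← mul_assoc, sub_one_pow_mul_bernoulliGenFun B hB,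
    expPS_zero, mul_one]

theorem bernoulli_eq_sum_choose_mul (α m : ℕ) (x : ℂ) :
    B α m x = ∑ j ∈ Finset.range (m + 1), (m.choose j : ℂ) * B α (m - j) 0 * x ^ j := by
  have h := congrArg (coeff m) (bernoulliGenFun_eq_mul_expPS B hB α x)
  rw [bernoulliGenFun, bernoulliGenFun, coeff_mk, coeff_mul,
    Finset.Nat.sum_antidiagonal_eq_sum_range_succ (fun i j => coeff i _ * coeff j _),
    ← Finset.sum_range_reflect] at h
  rw [div_eq_iff (Nat.cast_ne_zero.2 m.factorial_ne_zero), Nat.succ_sub_one] at h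
  rw [h, Finset.sum_mul]
  refine Finset.sum_congr rfl fun j hj => ?_
  have hjm : j ≤ m := Nat.lt_succ_iff.1 (Finset.mem_range.1 hj)
  simp only [coeff_mk, expPS, Nat.sub_sub_self hjm, Nat.cast_choose ℂ hjm]
  field_simp

theorem bernoulli_one_zero (x : ℂ) : B 1 0 x = 1 := by
  have h := congrArg (coeff 1) (hB 1 x)
  rw [pow_one, pow_one, sub_mul, one_mul, map_sub, coeff_mul,
    Finset.Nat.sum_antidiagonal_eq_sum_range_succ (fun i j => coeff i _ * coeff j _),
    coeff_succ_X_mul] at h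
  simpa [expPS, Finset.sum_range_succ] using h

theorem X_mul_derivative_bernoulliGenFun (α : ℕ) (x : ℂ) :
    X * d⁄dX ℂ (bernoulliGenFun B α x) =
      C (α : ℂ) * bernoulliGenFun B α x - C (α : ℂ) * bernoulliGenFun B (α + 1) (x + 1) +
        C x * X * bernoulliGenFun B α x := by
  have hα := sub_one_pow_mul_bernoulliGenFun B hB α x
  have hα1 := sub_one_pow_mul_bernoulliGenFun B hB (α + 1) (x + 1)
  have hd := congrArg (d⁄dX ℂ) hα
  simp only [Derivation.leibniz, derivative_expPS, smul_eq_mul] at hd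
  have hs := mul_derivative_pow (expPS 1 - 1) α
  have hX := mul_derivative_pow (X : ℂ⟦X⟧) α
  rw [map_sub, derivative_expPS, Derivation.map_one_eq_zero, sub_zero, map_one, one_mul] at hs
  rw [derivative_X, mul_one] at hX
  rw [← expPS_mul_expPS] at hα1
  apply mul_left_cancel₀ (pow_ne_zero (α + 1) expPS_one_sub_one_ne_zero)
  rw [map_natCast]
  set s := expPS 1 - 1
  set A := bernoulliGenFun B α x
  linear_combination X * s * hd + s * expPS x * hX - X * A * hs + (α : ℂ⟦X⟧) * hα1
    - ((α : ℂ⟦X⟧) * s + C x * X * s + (α : ℂ⟦X⟧) * X * expPS 1) * hα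

theorem bernoulli_succ_succ_add_one (k : ℕ) (x : ℂ) :
    B (k + 2) (k + 1) (x + 1) = x * B (k + 1) k x := by
  have h := congrArg (coeff (k + 1)) (X_mul_derivative_bernoulliGenFun B hB (k + 1) x)
  simp only [map_add, map_sub, mul_assoc, coeff_C_mul, coeff_succ_X_mul, coeff_derivative,
    bernoulliGenFun, coeff_mk, Nat.factorial_succ, Nat.cast_mul] at h
  have hk : (k.factorial : ℂ) ≠ 0 := Nat.cast_ne_zero.2 k.factorial_ne_zero
  field_simp at h
  push_cast at h
  apply mul_left_cancel₀ (Nat.cast_add_one_ne_zero k : (k : ℂ) + 1 ≠ 0)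
  linear_combination h

theorem mul_bernoulli_eq_prod (k : ℕ) (x : ℂ) :
    x * B (k + 1) k x = ∏ i ∈ Finset.range (k + 1), (x - i) := by
  induction k generalizing x with
  | zero => simp [bernoulli_one_zero B hB]
  | succ k ih =>
    have h := bernoulli_succ_succ_add_one B hB k (x - 1)
    rw [sub_add_cancel] at h
    rw [h, ih, Finset.prod_range_succ' _ (k + 1)]
    simp only [Nat.cast_add, Nat.cast_one, Nat.cast_zero, sub_zero]
    rw [mul_comm]; congr 1
    exact Finset.prod_congr rfl fun i _ => by ring

end

/-- For every integer `n ≥ 1` and `0 ≤ l ≤ n-1`,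
`S₁(n, l+1) = C(n-1, l) · B_{n-1-l}^{(n)}`, where the Bernoulli polynomials of order `α`
are characterized by `(t/(e^t-1))^α e^{xt} = ∑_m B_m^{(α)}(x) t^m/m!` (and
`B_m^{(α)} = B_m^{(α)}(0)`), and the Stirling numbers of the first kind `S₁(m,l)` by
`x(x-1)⋯(x-m+1) = ∑_{l=0}^m S₁(m,l) x^l`. -/
theorem stmt3 (n l : ℕ) (hn : 1 ≤ n) (hl : l ≤ n - 1)
    (S1 : ℕ → ℕ → ℂ)
    (hS1 : ∀ (m : ℕ) (x : ℂ),
      ∏ i ∈ Finset.range m, (x - i) = ∑ j ∈ Finset.range (m + 1), S1 m j * x ^ j)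
    (B : ℕ → ℕ → ℂ → ℂ)
    (hB : ∀ (α : ℕ) (x : ℂ),
      (expPS 1 - 1) ^ α *
          PowerSeries.mk (fun m => B α m x / (m.factorial : ℂ)) =
        PowerSeries.X ^ α * expPS x) :
    S1 n (l + 1) = ((n - 1).choose l : ℂ) * B n (n - 1 - l) 0 := by
  obtain ⟨k, rfl⟩ : ∃ k, n = k + 1 := ⟨n - 1, by omega⟩
  rw [Nat.add_sub_cancel] at hl ⊢
  open Polynomial in
  have hpoly : ∑ j ∈ Finset.range (k + 2), C (S1 (k + 1) j) * X ^ j =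
      X * ∑ j ∈ Finset.range (k + 1), C ((k.choose j : ℂ) * B (k + 1) (k - j) 0) * X ^ j := by
    refine Polynomial.funext fun x => ?_
    simp only [eval_finsetSum, eval_mul, eval_C, eval_pow, eval_X]
    rw [← hS1, ← mul_bernoulli_eq_prod B hB, bernoulli_eq_sum_choose_mul B hB]
  have h := congrArg (Polynomial.coeff · (l + 1)) hpoly
  simp only [Polynomial.coeff_X_mul, Polynomial.finsetSum_coeff, Polynomial.coeff_C_mul_X_pow,
    Finset.sum_ite_eq, Finset.mem_range] at h
  simpa [show l + 1 < k + 2 by omega, show l < k + 1 by omega] using h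
end

section
/- For every λ ∈ ℂ with λ ≠ 1 and every k ∈ ℤ_{≥0}, the k-th Frobenius–Euler number satisfies H_k(λ) = Σ_{l=0}^{k} (1/(λ-1))^l · l! · S₂(k, l). -/
/-!
With `u = 1/(λ-1)` and `a = u (e^t - 1)` one has `e^t - λ = (1-λ)(1 - a)`, so the generating
function of the `H_m(λ)` is the inverse of `1 - a`. As `a` has no constant term, the `t^k`
coefficient of `(1 - a)⁻¹` is that of the finite geometric sum `∑_{l ≤ k} a^l`, and the `t^k`
coefficient of `a^l = u^l (e^t - 1)^l` is `u^l l! S₂(k,l) / k!`.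
-/

namespace PowerSeries

variable {R : Type*} [CommRing R]

theorem coeff_pow_mul_eq_zero_of_lt {a : R⟦X⟧} (ha : constantCoeff a = 0) (g : R⟦X⟧)
    {n l : ℕ} (hnl : n < l) : coeff n (a ^ l * g) = 0 := by
  have hX : (X : R⟦X⟧) ^ l ∣ a ^ l * g :=
    (pow_dvd_pow_of_dvd (X_dvd_iff.mpr ha) l).mul_right g
  exact X_pow_dvd_iff.mp hX n hnl

theorem coeff_eq_sum_coeff_pow_of_one_sub_mul_eq_one {a f : R⟦X⟧}
    (ha : constantCoeff a = 0) (hf : (1 - a) * f = 1) (n : ℕ) :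
    coeff n f = ∑ l ∈ Finset.range (n + 1), coeff n (a ^ l) := by
  have hsplit : f = ∑ l ∈ Finset.range (n + 1), a ^ l + a ^ (n + 1) * f := by
    calc f = ((∑ l ∈ Finset.range (n + 1), a ^ l) * (1 - a) + a ^ (n + 1)) * f := by
            rw [geom_sum_mul_neg, sub_add_cancel, one_mul]
      _ = _ := by rw [add_mul, mul_assoc, hf, mul_one]
  conv_lhs => rw [hsplit]
  rw [map_add, coeff_pow_mul_eq_zero_of_lt ha f (Nat.lt_succ_self n), add_zero, map_sum]

end PowerSeries

open PowerSeries

theorem one_sub_C_mul_sub_one_eq {K : Type*} [Field K] {lam : K} (hlam : lam ≠ 1)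
    (E : K⟦X⟧) :
    1 - C (1 / (lam - 1)) * (E - 1) = C (1 / (1 - lam)) * (E - C lam) := by
  have hc : C (1 / (1 - lam)) * (1 - C lam) = 1 := by
    rw [← map_one C, ← map_sub, ← map_mul, one_div_mul_cancel (sub_ne_zero.mpr hlam.symm)]
  have hu : (1 : K) / (lam - 1) = -(1 / (1 - lam)) := by rw [← one_div_neg_eq_neg_one_div, neg_sub]
  rw [hu, map_neg]
  linear_combination -hc

theorem constantCoeff_expPS (c : ℂ) : constantCoeff (expPS c) = 1 := by
  simp [expPS]

/-- For `λ ≠ 1` and every `k ∈ ℤ_{≥0}`,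
`H_k(λ) = ∑_{l=0}^{k} (1/(λ-1))^l l! S₂(k,l)`, where the Frobenius–Euler numbers
`H_m(λ)` are characterized by `(1-λ)/(e^t-λ) = ∑_m H_m(λ) t^m/m!`, i.e.
`(e^t-λ) ∑_m H_m(λ) t^m/m! = 1-λ`, and the Stirling numbers of the second kind
`S₂(l,m)` by `(e^t-1)^m = m! ∑_l S₂(l,m) t^l/l!`. -/
theorem stmt10 (lam : ℂ) (hlam : lam ≠ 1) (k : ℕ)
    (H : ℕ → ℂ)
    (hH : (expPS 1 - PowerSeries.C lam) *
          PowerSeries.mk (fun m => H m / (m.factorial : ℂ)) =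
        PowerSeries.C (1 - lam))
    (S2 : ℕ → ℕ → ℂ)
    (hS2 : ∀ m : ℕ,
      (expPS 1 - 1) ^ m =
        PowerSeries.C (m.factorial : ℂ) *
          PowerSeries.mk (fun l => S2 l m / (l.factorial : ℂ))) :
    H k = ∑ l ∈ Finset.range (k + 1), (1 / (lam - 1)) ^ l * (l.factorial : ℂ) * S2 k l := by
  set a := C (1 / (lam - 1)) * (expPS 1 - 1)
  have ha : constantCoeff a = 0 := by simp [a, constantCoeff_expPS]
  have hinv : (1 - a) * mk (fun m => H m / (m.factorial : ℂ)) = 1 := by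
    rw [one_sub_C_mul_sub_one_eq hlam, mul_assoc, hH, ← map_mul,
      one_div_mul_cancel (sub_ne_zero.mpr hlam.symm), map_one]
  have hcoeff_pow (l : ℕ) : coeff k (a ^ l) =
      (1 / (lam - 1)) ^ l * (l.factorial : ℂ) * S2 k l / (k.factorial : ℂ) := by
    rw [mul_pow, ← map_pow, hS2, ← mul_assoc, ← map_mul, coeff_C_mul, coeff_mk]
    ring
  have hk := coeff_eq_sum_coeff_pow_of_one_sub_mul_eq_one ha hinv k
  simp only [coeff_mk, hcoeff_pow, ← Finset.sum_div] at hk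
  exact (div_left_inj' (Nat.cast_ne_zero.mpr k.factorial_ne_zero)).mp hk
end
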